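/- Let Q₀ be an m×m Hermitian positive definite complex matrix, let A = [a | B] be an m×d complex matrix with A*·Q₀⁻¹·A invertible (hence B*·Q₀⁻¹·B invertible), R₀ an m×m Hermitian positive semidefinite complex matrix and α > 0 a real number. Define Φ_A := A·(A*·Q₀⁻¹·A)⁻¹·A*·Q₀⁻¹, Φ_A^⊥ := I_m - Φ_A, Φ_B := B·(B*·Q₀⁻¹·B)⁻¹·B*·Q₀⁻¹, Φ_B^⊥ := I_m - Φ_B, G := Q₀⁻¹·Φ_B^⊥, and suppose I_m + α·G·R₀ is invertible and a*·G·a ≠ 0. Define Ψ := G·R₀·(I_m + α·G·R₀)⁻¹·G. Then det(I_m + α·Q₀⁻¹·Φ_A^⊥·R₀) = det(I_m + α·G·R₀)·(1 - α·(a*·Ψ·a)/(a*·G·a)). -/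

import Mathlib

/-!
With `W = Q₀⁻¹`, `Φ_C` is the `W`-orthogonal projection onto the column space of `C`, i.e. an
idempotent with `W Φ_C` Hermitian, and two such idempotents with the same range agree after
left multiplication by `W`. Applied to `Φ_B + ã (aᴴ G a)⁻¹ aᴴ G` with `ã = Φ_B^⊥ a`, whose range
is that of `A = [a | B]`, this gives `W Φ_A^⊥ = G - G a (aᴴ G a)⁻¹ aᴴ G`. Hence
`I + α W Φ_A^⊥ R₀` is a rank-one perturbation of `I + α G R₀`, and the matrix determinant lemma
produces the factor `1 - α aᴴ Ψ a / aᴴ G a`.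
-/

open Matrix ComplexOrder

theorem mul_eq_mul_of_isSelfAdjoint_of_mul_eq {M : Type*} [Monoid M] [StarMul M] {w p q : M}
    (hw : IsSelfAdjoint w) (hp : IsSelfAdjoint (w * p)) (hq : IsSelfAdjoint (w * q))
    (hpq : p * q = q) (hqp : q * p = p) : w * p = w * q :=
  calc w * p = w * q * p := by rw [mul_assoc, hqp]
    _ = star q * w * p := by rw [← hq.star_eq, star_mul, hw.star_eq]
    _ = star (w * p * q) := by rw [star_mul, hp.star_eq, mul_assoc]
    _ = w * q := by rw [mul_assoc, hpq, hq.star_eq]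

namespace Matrix

section WeightedProj

variable {R : Type*} [CommRing R] [StarRing R] {m n p : Type*}
  [Fintype m] [Fintype n] [DecidableEq n] [Fintype p] [DecidableEq p]

noncomputable def weightedProj (W : Matrix m m R) (C : Matrix m n R) : Matrix m m R :=
  C * (Cᴴ * W * C)⁻¹ * Cᴴ * W

variable {W : Matrix m m R}

theorem weightedProj_mul_self {C : Matrix m n R} (hC : IsUnit (Cᴴ * W * C)) :
    weightedProj W C * C = C := by
  simp only [weightedProj, Matrix.mul_assoc]
  rw [← Matrix.mul_assoc Cᴴ, nonsing_inv_mul _ ((isUnit_iff_isUnit_det _).mp hC), Matrix.mul_one]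

theorem isHermitian_mul_weightedProj (hW : W.IsHermitian) (C : Matrix m n R) :
    (W * weightedProj W C).IsHermitian := by
  have hgram : (Cᴴ * W * C)⁻¹.IsHermitian :=
    (isHermitian_conjTranspose_mul_mul C hW).inv
  simpa only [weightedProj, Matrix.mul_assoc, conjTranspose_mul, conjTranspose_conjTranspose,
    hW.eq] using isHermitian_conjTranspose_mul_mul (Cᴴ * W) hgram

variable [DecidableEq m]

theorem isHermitian_mul_one_sub_weightedProj (hW : W.IsHermitian) (C : Matrix m n R) :
    (W * (1 - weightedProj W C)).IsHermitian := by
  rw [Matrix.mul_sub, Matrix.mul_one]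
  exact hW.sub (isHermitian_mul_weightedProj hW C)

theorem mul_one_sub_weightedProj_mul_self {C : Matrix m n R} (hC : IsUnit (Cᴴ * W * C)) :
    W * (1 - weightedProj W C) * C = 0 := by
  rw [Matrix.mul_assoc, Matrix.sub_mul, weightedProj_mul_self hC, Matrix.one_mul, sub_self,
    Matrix.mul_zero]

theorem mul_weightedProj_fromCols (hW : W.IsHermitian) (a : Matrix m p R) {B : Matrix m n R}
    (hB : IsUnit (Bᴴ * W * B)) (hA : IsUnit ((fromCols a B)ᴴ * W * fromCols a B))
    (ha : IsUnit (aᴴ * (W * (1 - weightedProj W B)) * a)) :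
    W * weightedProj W (fromCols a B) = W * weightedProj W B
      + W * (1 - weightedProj W B) * a * (aᴴ * (W * (1 - weightedProj W B)) * a)⁻¹
        * aᴴ * (W * (1 - weightedProj W B)) := by
  set ΦB := weightedProj W B
  set ΦA := weightedProj W (fromCols a B)
  set G := W * (1 - ΦB)
  set X := aᴴ * G * a
  have hG : G.IsHermitian := isHermitian_mul_one_sub_weightedProj hW B
  have hGB : G * B = 0 := mul_one_sub_weightedProj_mul_self hB
  obtain ⟨hΦAa, hΦAB⟩ : ΦA * a = a ∧ ΦA * B = B := by
    have h := weightedProj_mul_self hA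
    rw [mul_fromCols] at h
    exact fromCols_inj.eq_iff.mp h
  have hΦAΦB : ΦA * ΦB = ΦB := by
    simp only [ΦB, weightedProj, Matrix.mul_assoc]
    rw [← Matrix.mul_assoc ΦA, hΦAB]
  have hΦAã : ΦA * (1 - ΦB) * a = (1 - ΦB) * a := by
    rw [Matrix.mul_sub, Matrix.mul_one, hΦAΦB, Matrix.sub_mul, hΦAa, Matrix.sub_mul, Matrix.one_mul]
  set P := ΦB + (1 - ΦB) * a * X⁻¹ * aᴴ * G
  have hWP : W * P = W * ΦB + G * a * X⁻¹ * aᴴ * G := by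
    simp only [P, G, Matrix.mul_add, Matrix.mul_assoc]
  have hPa : P * a = a := by
    have : X⁻¹ * aᴴ * G * a = 1 := by
      simp only [Matrix.mul_assoc]
      rw [← Matrix.mul_assoc aᴴ, nonsing_inv_mul _ ((isUnit_iff_isUnit_det _).mp ha)]
    simp only [P, Matrix.add_mul, Matrix.mul_assoc] at this ⊢
    rw [this, Matrix.mul_one, Matrix.sub_mul, Matrix.one_mul, add_sub_cancel]
  have hPB : P * B = B := by
    simp only [P, Matrix.add_mul, Matrix.mul_assoc, hGB, Matrix.mul_zero, add_zero]
    exact weightedProj_mul_self hB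
  have hPΦA : P * ΦA = ΦA := by
    simp only [ΦA, weightedProj, ← Matrix.mul_assoc, mul_fromCols, hPa, hPB]
  have hΦAP : ΦA * P = P := by
    simp only [P, Matrix.mul_add, hΦAΦB, ← Matrix.mul_assoc, hΦAã]
  have hXinv : X⁻¹.IsHermitian := (isHermitian_conjTranspose_mul_mul a hG).inv
  have hWPherm : (W * P).IsHermitian := by
    rw [hWP]
    refine (isHermitian_mul_weightedProj hW B).add ?_
    simpa only [conjTranspose_mul, conjTranspose_conjTranspose, hG.eq, Matrix.mul_assoc]
      using isHermitian_conjTranspose_mul_mul (aᴴ * G) hXinv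
  rw [← hWP]
  exact mul_eq_mul_of_isSelfAdjoint_of_mul_eq hW (isHermitian_mul_weightedProj hW _) hWPherm
    hΦAP hPΦA

end WeightedProj

theorem det_one_add_smul_sub_mul_mul {R m p : Type*} [CommRing R] [Fintype m] [DecidableEq m]
    [Fintype p] [DecidableEq p] {c : R} {G S : Matrix m m R} (u : Matrix m p R)
    (Y : Matrix p p R) (v : Matrix p m R) (hM : IsUnit (1 + c • (G * S))) :
    det (1 + c • ((G - u * Y * v) * S))
      = det (1 + c • (G * S)) * det (1 - c • (Y * (v * S * (1 + c • (G * S))⁻¹ * u))) := by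
  have hsplit : 1 + c • ((G - u * Y * v) * S) = 1 + c • (G * S) + u * (-c • (Y * v * S)) := by
    simp only [Matrix.sub_mul, smul_sub, Matrix.mul_smul, Matrix.mul_assoc, neg_smul,
      Matrix.mul_neg]
    abel
  rw [hsplit, det_add_mul _ _ ((isUnit_iff_isUnit_det _).mp hM)]
  simp only [Matrix.neg_mul, Matrix.smul_mul, Matrix.mul_assoc, neg_smul, sub_eq_add_neg]

theorem isUnit_conjTranspose_mul_mul_of_fromCols {𝕜 m n p : Type*} [RCLike 𝕜] [Fintype m]
    [Fintype n] [DecidableEq n] [Fintype p] [DecidableEq p] {W : Matrix m m 𝕜} (hW : W.PosSemidef)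
    (a : Matrix m p 𝕜) (B : Matrix m n 𝕜) (hA : IsUnit ((fromCols a B)ᴴ * W * fromCols a B)) :
    IsUnit (Bᴴ * W * B) := by
  have hApd := (hW.conjTranspose_mul_mul_same (fromCols a B)).posDef_iff_isUnit.mpr hA
  have hsub : ((fromCols a B)ᴴ * W * fromCols a B).submatrix Sum.inr Sum.inr = Bᴴ * W * B := by
    ext i j
    simp [Matrix.mul_apply]
  exact hsub ▸ (hApd.submatrix Sum.inr_injective).isUnit

theorem det_one_sub_smul_inv_mul_of_unique {K p : Type*} [Field K] [Fintype p] [DecidableEq p]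
    [Unique p] (c : K) (X Z : Matrix p p K) (i : p) :
    det (1 - c • (X⁻¹ * Z)) = 1 - c * Z i i / X i i := by
  simp only [inv_subsingleton, Ring.inverse_eq_inv', det_unique, sub_apply, one_apply_eq,
    smul_apply, mul_apply, Finset.univ_unique, Finset.sum_singleton, diagonal_apply_eq,
    smul_eq_mul, Unique.eq_default i, div_eq_inv_mul, sub_right_inj]
  ring

end Matrix

theorem stmt12_general (m k : ℕ) (Q₀ : Matrix (Fin m) (Fin m) ℂ) (hQ₀ : Q₀.PosDef)
    (a : Matrix (Fin m) (Fin 1) ℂ) (B : Matrix (Fin m) (Fin k) ℂ)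
    (A : Matrix (Fin m) (Fin 1 ⊕ Fin k) ℂ) (hA : A = fromCols a B)
    (hGram : IsUnit (Aᴴ * Q₀⁻¹ * A))
    (R₀ : Matrix (Fin m) (Fin m) ℂ)
    (α : ℝ)
    (ΦAperp : Matrix (Fin m) (Fin m) ℂ)
    (hΦAperp : ΦAperp = 1 - A * (Aᴴ * Q₀⁻¹ * A)⁻¹ * Aᴴ * Q₀⁻¹)
    (ΦBperp : Matrix (Fin m) (Fin m) ℂ)
    (hΦBperp : ΦBperp = 1 - B * (Bᴴ * Q₀⁻¹ * B)⁻¹ * Bᴴ * Q₀⁻¹)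
    (G : Matrix (Fin m) (Fin m) ℂ) (hG : G = Q₀⁻¹ * ΦBperp)
    (hinv : IsUnit ((1 : Matrix (Fin m) (Fin m) ℂ) + (α : ℂ) • (G * R₀)))
    (hden : (aᴴ * G * a) 0 0 ≠ 0)
    (Ψ : Matrix (Fin m) (Fin m) ℂ)
    (hΨ : Ψ = G * R₀ * ((1 : Matrix (Fin m) (Fin m) ℂ) + (α : ℂ) • (G * R₀))⁻¹ * G) :
    ((1 : Matrix (Fin m) (Fin m) ℂ) + (α : ℂ) • (Q₀⁻¹ * ΦAperp * R₀)).det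
      = ((1 : Matrix (Fin m) (Fin m) ℂ) + (α : ℂ) • (G * R₀)).det
        * (1 - (α : ℂ) * ((aᴴ * Ψ * a) 0 0) / ((aᴴ * G * a) 0 0)) := by
  have hW : (Q₀⁻¹).IsHermitian := hQ₀.inv.isHermitian
  have hGproj : G = Q₀⁻¹ * (1 - weightedProj Q₀⁻¹ B) := hΦBperp ▸ hG
  have hB : IsUnit (Bᴴ * Q₀⁻¹ * B) := by
    subst hA
    exact isUnit_conjTranspose_mul_mul_of_fromCols hQ₀.inv.posSemidef a B hGram
  have hX : IsUnit (aᴴ * G * a) := by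
    rwa [isUnit_iff_isUnit_det, det_unique, isUnit_iff_ne_zero]
  have hkey : Q₀⁻¹ * ΦAperp = G - G * a * (aᴴ * G * a)⁻¹ * (aᴴ * G) := by
    subst hA hGproj
    rw [hΦAperp, ← weightedProj, Matrix.mul_sub, Matrix.mul_one,
      mul_weightedProj_fromCols hW a hB hGram hX, Matrix.mul_sub Q₀⁻¹ 1, Matrix.mul_one]
    simp only [Matrix.mul_assoc]
    abel
  rw [hkey, det_one_add_smul_sub_mul_mul _ _ _ hinv, det_one_sub_smul_inv_mul_of_unique (i := 0), hΨ]
  simp only [Matrix.mul_assoc]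

/-- Determinant factorization underlying the one-dimensional search cost `V(θ)`:
`det(I + α Q₀⁻¹ Φ_A^⊥ R₀) = det(I + α G R₀) · (1 - α (aᴴ Ψ a)/(aᴴ G a))`
for `A = [a | B]`, `G = Q₀⁻¹ Φ_B^⊥` and `Ψ = G R₀ (I + α G R₀)⁻¹ G`. -/
theorem stmt12 (m k : ℕ) (Q₀ : Matrix (Fin m) (Fin m) ℂ) (hQ₀ : Q₀.PosDef)
    (a : Matrix (Fin m) (Fin 1) ℂ) (B : Matrix (Fin m) (Fin k) ℂ)
    (A : Matrix (Fin m) (Fin 1 ⊕ Fin k) ℂ) (hA : A = fromCols a B)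
    (hGram : IsUnit (Aᴴ * Q₀⁻¹ * A))
    (R₀ : Matrix (Fin m) (Fin m) ℂ) (hR₀ : R₀.PosSemidef)
    (α : ℝ) (hα : 0 < α)
    (ΦAperp : Matrix (Fin m) (Fin m) ℂ)
    (hΦAperp : ΦAperp = 1 - A * (Aᴴ * Q₀⁻¹ * A)⁻¹ * Aᴴ * Q₀⁻¹)
    (ΦBperp : Matrix (Fin m) (Fin m) ℂ)
    (hΦBperp : ΦBperp = 1 - B * (Bᴴ * Q₀⁻¹ * B)⁻¹ * Bᴴ * Q₀⁻¹)
    (G : Matrix (Fin m) (Fin m) ℂ) (hG : G = Q₀⁻¹ * ΦBperp)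
    (hinv : IsUnit ((1 : Matrix (Fin m) (Fin m) ℂ) + (α : ℂ) • (G * R₀)))
    (hden : (aᴴ * G * a) 0 0 ≠ 0)
    (Ψ : Matrix (Fin m) (Fin m) ℂ)
    (hΨ : Ψ = G * R₀ * ((1 : Matrix (Fin m) (Fin m) ℂ) + (α : ℂ) • (G * R₀))⁻¹ * G) :
    ((1 : Matrix (Fin m) (Fin m) ℂ) + (α : ℂ) • (Q₀⁻¹ * ΦAperp * R₀)).det
      = ((1 : Matrix (Fin m) (Fin m) ℂ) + (α : ℂ) • (G * R₀)).det
        * (1 - (α : ℂ) * ((aᴴ * Ψ * a) 0 0) / ((aᴴ * G * a) 0 0)) :=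
  stmt12_general m k Q₀ hQ₀ a B A hA hGram R₀ α ΦAperp hΦAperp ΦBperp hΦBperp G hG hinv hden Ψ hΨ
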